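/- Let U : Ω × Ω → ℝ be symmetric measurable with ‖U‖_∞ ≤ 2B and ‖D_{|U|}‖_∞ ≤ 2D on a σ-finite measure space (Ω,F,μ), and let μ' ≤ μ with μ − r ≤ μ', induced by a density h : Ω → [0,1] with ‖1−h‖_{1,μ} ≤ r. Then ‖U‖_{2→2,μ} ≤ ‖U‖_{2→2,μ'} + 4√(B D r). -/

import Mathlib

open MeasureTheory ENNReal

/-!
Write `ν = h μ` and split `f(x) g(y)` as
`h(x) f(x) · h(y) g(y) + (1 - h(x)) f(x) · g(y) + h(x) f(x) · (1 - h(y)) g(y)`.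
Against `U`, the first term integrates to the `ν`-pairing of `f` and `g`, whose `L²(ν)`-norms are
at most their `L²(μ)`-norms, so it is at most `‖U‖_{2→2,ν}`. By symmetry of `U` both other terms
have the form `∫∫ w(x) a(x) U(x,y) b(y)` with `w = 1 - h`; Cauchy–Schwarz for the measure
`|U(x,y)| dμ(x) dμ(y)`, applied to `w(x)` and `|a(x)| |b(y)|`, bounds each by
`√(2D ‖w‖₂² · 2B) ≤ 2√(BDr)`. The same inequality applied to `|a(x)|` and `|b(y)|` (Schur's test)
makes all double integrals absolutely convergent and shows that the set whose `sSup` defines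
`‖U‖_{2→2,ν}` is bounded above (by `2D`).
-/

/-- The kernel norm `‖U‖_{2→2,ν}`: the operator norm of the integral operator with
kernel `U` on `L²(Ω, ν)`. -/
noncomputable def kernelNorm {Ω : Type*} [MeasurableSpace Ω] (ν : Measure Ω)
    (U : Ω → Ω → ℝ) : ℝ :=
  sSup {r : ℝ | ∃ f g : Ω → ℝ, Measurable f ∧ Measurable g ∧
    eLpNorm f 2 ν = 1 ∧ eLpNorm g 2 ν = 1 ∧
    r = ∫ x, ∫ y, f x * U x y * g y ∂ν ∂ν}

section CauchySchwarz

variable {α : Type*} [MeasurableSpace α] {ρ : Measure α}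

theorem ENNReal.sq_lintegral_mul_le {a b : α → ℝ≥0∞} (ha : AEMeasurable a ρ)
    (hb : AEMeasurable b ρ) :
    (∫⁻ z, a z * b z ∂ρ) ^ 2 ≤ (∫⁻ z, a z ^ 2 ∂ρ) * ∫⁻ z, b z ^ 2 ∂ρ := by
  have h := ENNReal.lintegral_mul_le_Lp_mul_Lq ρ Real.HolderConjugate.two_two ha hb
  have hsq : ∀ x : ℝ≥0∞, (x ^ (1 / 2 : ℝ)) ^ 2 = x := fun x => by
    rw [← ENNReal.rpow_natCast, ← ENNReal.rpow_mul]; norm_num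
  calc (∫⁻ z, a z * b z ∂ρ) ^ 2
      ≤ ((∫⁻ z, a z ^ (2 : ℝ) ∂ρ) ^ (1 / 2 : ℝ) * (∫⁻ z, b z ^ (2 : ℝ) ∂ρ) ^ (1 / 2 : ℝ)) ^ 2 :=
        pow_le_pow_left₀ (by positivity) h 2
    _ = (∫⁻ z, a z ^ 2 ∂ρ) * ∫⁻ z, b z ^ 2 ∂ρ := by
        simp only [mul_pow, hsq, ENNReal.rpow_two]

theorem ENNReal.sq_lintegral_mul_mul_le {K a b : α → ℝ≥0∞} (hK : Measurable K)
    (ha : Measurable a) (hb : Measurable b) :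
    (∫⁻ z, a z * b z * K z ∂ρ) ^ 2
      ≤ (∫⁻ z, a z ^ 2 * K z ∂ρ) * ∫⁻ z, b z ^ 2 * K z ∂ρ := by
  have hwd : ∀ c : α → ℝ≥0∞, Measurable c →
      ∫⁻ z, c z * K z ∂ρ = ∫⁻ z, c z ∂ρ.withDensity K := fun c hc => by
    rw [lintegral_withDensity_eq_lintegral_mul _ hK hc]; simp only [Pi.mul_apply, mul_comm]
  have hab := hwd (fun z => a z * b z) (ha.mul hb)
  have ha2 := hwd (fun z => a z ^ 2) (ha.pow_const 2)
  have hb2 := hwd (fun z => b z ^ 2) (hb.pow_const 2)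
  beta_reduce at hab ha2 hb2
  rw [hab, ha2, hb2]
  exact sq_lintegral_mul_le ha.aemeasurable hb.aemeasurable

end CauchySchwarz

section SchurTest

variable {Ω : Type*} [MeasurableSpace Ω] {μ : Measure Ω} [SFinite μ] {U : Ω → Ω → ℝ}
  {C : ℝ≥0∞}

theorem lintegral_prod_mul_enorm_le_of_row (hU : Measurable (Function.uncurry U))
    (hrow : ∀ x, ∫⁻ y, ‖U x y‖ₑ ∂μ ≤ C) {p : Ω → ℝ≥0∞} (hp : Measurable p) :
    ∫⁻ z, p z.1 * ‖U z.1 z.2‖ₑ ∂μ.prod μ ≤ C * ∫⁻ x, p x ∂μ := by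
  have hm : Measurable fun z : Ω × Ω => p z.1 * ‖U z.1 z.2‖ₑ :=
    (hp.comp measurable_fst).mul hU.enorm
  calc ∫⁻ z, p z.1 * ‖U z.1 z.2‖ₑ ∂μ.prod μ
      = ∫⁻ x, p x * ∫⁻ y, ‖U x y‖ₑ ∂μ ∂μ := by
        rw [lintegral_prod _ hm.aemeasurable]
        exact lintegral_congr fun x => lintegral_const_mul (p x) hU.of_uncurry_left.enorm
    _ ≤ ∫⁻ x, p x * C ∂μ := lintegral_mono fun x => by gcongr; exact hrow x
    _ = C * ∫⁻ x, p x ∂μ := by rw [lintegral_mul_const _ hp, mul_comm]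

theorem lintegral_prod_mul_enorm_le_of_col (hU : Measurable (Function.uncurry U))
    (hcol : ∀ y, ∫⁻ x, ‖U x y‖ₑ ∂μ ≤ C) {q : Ω → ℝ≥0∞} (hq : Measurable q) :
    ∫⁻ z, q z.2 * ‖U z.1 z.2‖ₑ ∂μ.prod μ ≤ C * ∫⁻ y, q y ∂μ := by
  rw [← lintegral_prod_swap]
  exact lintegral_prod_mul_enorm_le_of_row (U := fun x y => U y x) (hU.comp measurable_swap)
    hcol hq

theorem sq_lintegral_prod_mul_enorm_le (hU : Measurable (Function.uncurry U))
    (hrow : ∀ x, ∫⁻ y, ‖U x y‖ₑ ∂μ ≤ C) (hcol : ∀ y, ∫⁻ x, ‖U x y‖ₑ ∂μ ≤ C)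
    {p q : Ω → ℝ≥0∞} (hp : Measurable p) (hq : Measurable q) :
    (∫⁻ z, p z.1 * q z.2 * ‖U z.1 z.2‖ₑ ∂μ.prod μ) ^ 2
      ≤ (C * ∫⁻ x, p x ^ 2 ∂μ) * (C * ∫⁻ y, q y ^ 2 ∂μ) :=
  (ENNReal.sq_lintegral_mul_mul_le hU.enorm (hp.comp measurable_fst)
    (hq.comp measurable_snd)).trans
    (mul_le_mul' (lintegral_prod_mul_enorm_le_of_row hU hrow (hp.pow_const 2))
      (lintegral_prod_mul_enorm_le_of_col hU hcol (hq.pow_const 2)))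

theorem sq_lintegral_prod_weight_mul_enorm_le (hU : Measurable (Function.uncurry U))
    (hrow : ∀ x, ∫⁻ y, ‖U x y‖ₑ ∂μ ≤ C) {M : ℝ≥0∞} (hM : ∀ x y, ‖U x y‖ₑ ≤ M)
    {w p q : Ω → ℝ≥0∞} (hw : Measurable w) (hp : Measurable p) (hq : Measurable q) :
    (∫⁻ z, w z.1 * (p z.1 * q z.2) * ‖U z.1 z.2‖ₑ ∂μ.prod μ) ^ 2
      ≤ (C * ∫⁻ x, w x ^ 2 ∂μ) * (M * ((∫⁻ x, p x ^ 2 ∂μ) * ∫⁻ y, q y ^ 2 ∂μ)) := by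
  have hpq : Measurable fun z : Ω × Ω => p z.1 * q z.2 :=
    (hp.comp measurable_fst).mul (hq.comp measurable_snd)
  refine (ENNReal.sq_lintegral_mul_mul_le hU.enorm (hw.comp measurable_fst) hpq).trans
    (mul_le_mul' (lintegral_prod_mul_enorm_le_of_row hU hrow (hw.pow_const 2)) ?_)
  calc ∫⁻ z, (p z.1 * q z.2) ^ 2 * ‖U z.1 z.2‖ₑ ∂μ.prod μ
      ≤ ∫⁻ z, M * (p z.1 ^ 2 * q z.2 ^ 2) ∂μ.prod μ :=
        lintegral_mono fun z => by rw [mul_pow, mul_comm]; gcongr; exact hM _ _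
    _ = M * ((∫⁻ x, p x ^ 2 ∂μ) * ∫⁻ y, q y ^ 2 ∂μ) := by
        rw [lintegral_const_mul _ (by fun_prop), lintegral_prod_mul
          (hp.pow_const 2).aemeasurable (hq.pow_const 2).aemeasurable]

end SchurTest

section Pairing

variable {Ω : Type*} [MeasurableSpace Ω] {μ : Measure Ω}

theorem lintegral_enorm_sq_le_one {f : Ω → ℝ} (hf : eLpNorm f 2 μ ≤ 1) :
    ∫⁻ x, ‖f x‖ₑ ^ 2 ∂μ ≤ 1 := by
  have h := eLpNorm_nnreal_pow_eq_lintegral (f := f) (μ := μ) (p := 2) two_ne_zero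
  simp only [NNReal.coe_ofNat, ENNReal.rpow_two] at h
  rw [← h]
  simpa using pow_le_one₀ zero_le hf

theorem lintegral_enorm_mul_sq_le {c : Ω → ℝ} (hc : ∀ x, |c x| ≤ 1) (f : Ω → ℝ) :
    ∫⁻ x, ‖c x * f x‖ₑ ^ 2 ∂μ ≤ ∫⁻ x, ‖f x‖ₑ ^ 2 ∂μ := by
  refine lintegral_mono fun x => ?_
  rw [enorm_mul]
  gcongr
  exact mul_le_of_le_one_left zero_le (by simpa [Real.enorm_eq_ofReal_abs] using hc x)

theorem integral_le_of_lintegral_enorm_le {α : Type*} [MeasurableSpace α] {ρ : Measure α}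
    {F : α → ℝ} {c : ℝ} (hc : 0 ≤ c) (h : ∫⁻ z, ‖F z‖ₑ ∂ρ ≤ ENNReal.ofReal c) :
    ∫ z, F z ∂ρ ≤ c := by
  have h' := (enorm_integral_le_lintegral_enorm F).trans h
  rw [Real.enorm_eq_ofReal_abs, ENNReal.ofReal_le_ofReal_iff hc] at h'
  exact (le_abs_self _).trans h'

theorem integral_withDensity_ofReal {h : Ω → ℝ} (hh : Measurable h) (h0 : ∀ x, 0 ≤ h x)
    (F : Ω → ℝ) :
    ∫ x, F x ∂μ.withDensity (fun x => ENNReal.ofReal (h x)) = ∫ x, h x * F x ∂μ := by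
  rw [integral_withDensity_eq_integral_toReal_smul hh.ennreal_ofReal
    (ae_of_all _ fun _ => ofReal_lt_top)]
  simp only [ENNReal.toReal_ofReal (h0 _), smul_eq_mul]

theorem integral_integral_withDensity_ofReal {h : Ω → ℝ} (hh : Measurable h)
    (h0 : ∀ x, 0 ≤ h x) (U : Ω → Ω → ℝ) (f g : Ω → ℝ) :
    ∫ x, ∫ y, f x * U x y * g y ∂μ.withDensity (fun x => ENNReal.ofReal (h x))
        ∂μ.withDensity (fun x => ENNReal.ofReal (h x))
      = ∫ x, ∫ y, h x * f x * U x y * (h y * g y) ∂μ ∂μ := by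
  simp only [integral_withDensity_ofReal hh h0, ← integral_const_mul]
  congr with x
  congr with y
  ring

variable [SFinite μ] {U : Ω → Ω → ℝ} {C : ℝ≥0∞}

theorem integral_prod_pairing_swap (hsymm : ∀ x y, U x y = U y x) (f g : Ω → ℝ) :
    ∫ z, f z.1 * U z.1 z.2 * g z.2 ∂μ.prod μ = ∫ z, g z.1 * U z.1 z.2 * f z.2 ∂μ.prod μ := by
  rw [← integral_prod_swap]
  congr with z
  rw [Prod.fst_swap, Prod.snd_swap, hsymm]
  ring

theorem lintegral_enorm_pairing_le (hU : Measurable (Function.uncurry U))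
    (hrow : ∀ x, ∫⁻ y, ‖U x y‖ₑ ∂μ ≤ C) (hcol : ∀ y, ∫⁻ x, ‖U x y‖ₑ ∂μ ≤ C)
    {f g : Ω → ℝ} (hf : Measurable f) (hg : Measurable g)
    (hf2 : ∫⁻ x, ‖f x‖ₑ ^ 2 ∂μ ≤ 1) (hg2 : ∫⁻ y, ‖g y‖ₑ ^ 2 ∂μ ≤ 1) :
    ∫⁻ z, ‖f z.1 * U z.1 z.2 * g z.2‖ₑ ∂μ.prod μ ≤ C := by
  have h := sq_lintegral_prod_mul_enorm_le hU hrow hcol hf.enorm hg.enorm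
  have hC : (C * ∫⁻ x, ‖f x‖ₑ ^ 2 ∂μ) * (C * ∫⁻ y, ‖g y‖ₑ ^ 2 ∂μ) ≤ C ^ 2 := by
    rw [sq]
    exact mul_le_mul' (mul_le_of_le_one_right zero_le hf2) (mul_le_of_le_one_right zero_le hg2)
  refine (ENNReal.pow_le_pow_left_iff two_ne_zero).mp ?_
  simp only [enorm_mul, mul_right_comm _ ‖U _ _‖ₑ]
  exact h.trans hC

theorem integrable_pairing (hU : Measurable (Function.uncurry U))
    (hrow : ∀ x, ∫⁻ y, ‖U x y‖ₑ ∂μ ≤ C) (hcol : ∀ y, ∫⁻ x, ‖U x y‖ₑ ∂μ ≤ C) (hC : C ≠ ⊤)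
    {f g : Ω → ℝ} (hf : Measurable f) (hg : Measurable g)
    (hf2 : ∫⁻ x, ‖f x‖ₑ ^ 2 ∂μ ≤ 1) (hg2 : ∫⁻ y, ‖g y‖ₑ ^ 2 ∂μ ≤ 1) :
    Integrable (fun z : Ω × Ω => f z.1 * U z.1 z.2 * g z.2) (μ.prod μ) :=
  ⟨(((hf.comp measurable_fst).mul hU).mul (hg.comp measurable_snd)).aestronglyMeasurable,
    (lintegral_enorm_pairing_le hU hrow hcol hf hg hf2 hg2).trans_lt hC.lt_top⟩

theorem integral_integral_pairing_le (hU : Measurable (Function.uncurry U)) {c : ℝ}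
    (hc : 0 ≤ c) (hrow : ∀ x, ∫⁻ y, ‖U x y‖ₑ ∂μ ≤ ENNReal.ofReal c)
    (hcol : ∀ y, ∫⁻ x, ‖U x y‖ₑ ∂μ ≤ ENNReal.ofReal c)
    {f g : Ω → ℝ} (hf : Measurable f) (hg : Measurable g)
    (hf2 : ∫⁻ x, ‖f x‖ₑ ^ 2 ∂μ ≤ 1) (hg2 : ∫⁻ y, ‖g y‖ₑ ^ 2 ∂μ ≤ 1) :
    ∫ x, ∫ y, f x * U x y * g y ∂μ ∂μ ≤ c := by
  rw [← integral_prod _ (integrable_pairing hU hrow hcol ofReal_ne_top hf hg hf2 hg2)]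
  exact integral_le_of_lintegral_enorm_le hc
    (lintegral_enorm_pairing_le hU hrow hcol hf hg hf2 hg2)


theorem integral_prod_weight_pairing_le (hU : Measurable (Function.uncurry U)) {M c r : ℝ}
    (hM0 : 0 ≤ M) (hc : 0 ≤ c) (hr : 0 ≤ r) (hM : ∀ x y, |U x y| ≤ M)
    (hrow : ∀ x, ∫⁻ y, ‖U x y‖ₑ ∂μ ≤ ENNReal.ofReal c)
    {w : Ω → ℝ} (hw : Measurable w) (hw01 : ∀ x, w x ∈ Set.Icc 0 1)
    (hwr : ∫⁻ x, ENNReal.ofReal (w x) ∂μ ≤ ENNReal.ofReal r)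
    {f g : Ω → ℝ} (hf : Measurable f) (hg : Measurable g)
    (hf2 : ∫⁻ x, ‖f x‖ₑ ^ 2 ∂μ ≤ 1) (hg2 : ∫⁻ y, ‖g y‖ₑ ^ 2 ∂μ ≤ 1) :
    ∫ z, w z.1 * f z.1 * U z.1 z.2 * g z.2 ∂μ.prod μ ≤ √(c * r * M) := by
  have hUM : ∀ x y, ‖U x y‖ₑ ≤ ENNReal.ofReal M := fun x y => by
    simpa only [Real.enorm_eq_ofReal_abs] using ENNReal.ofReal_le_ofReal (hM x y)
  have hw2 : ∫⁻ x, ENNReal.ofReal (w x) ^ 2 ∂μ ≤ ENNReal.ofReal r := by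
    refine (lintegral_mono fun x => ?_).trans hwr
    rw [sq]
    exact mul_le_of_le_one_left zero_le (ENNReal.ofReal_le_one.mpr (hw01 x).2)
  have h := sq_lintegral_prod_weight_mul_enorm_le hU hrow hUM hw.ennreal_ofReal hf.enorm hg.enorm
  refine integral_le_of_lintegral_enorm_le (Real.sqrt_nonneg _)
    ((ENNReal.pow_le_pow_left_iff two_ne_zero).mp ?_)
  calc (∫⁻ z, ‖w z.1 * f z.1 * U z.1 z.2 * g z.2‖ₑ ∂μ.prod μ) ^ 2
      = (∫⁻ z, ENNReal.ofReal (w z.1) * (‖f z.1‖ₑ * ‖g z.2‖ₑ) * ‖U z.1 z.2‖ₑ ∂μ.prod μ) ^ 2 := by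
        congr 1
        refine lintegral_congr fun z => ?_
        rw [enorm_mul, enorm_mul, enorm_mul, Real.enorm_of_nonneg (hw01 _).1]
        ring
    _ ≤ (ENNReal.ofReal c * ENNReal.ofReal r) * (ENNReal.ofReal M * (1 * 1)) :=
        h.trans (by gcongr)
    _ = ENNReal.ofReal √(c * r * M) ^ 2 := by
        rw [← ENNReal.ofReal_pow (Real.sqrt_nonneg _), Real.sq_sqrt (by positivity),
          ENNReal.ofReal_mul (by positivity), ENNReal.ofReal_mul hc]
        ring

theorem integral_integral_eq_add_add (hU : Measurable (Function.uncurry U))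
    (hrow : ∀ x, ∫⁻ y, ‖U x y‖ₑ ∂μ ≤ C) (hcol : ∀ y, ∫⁻ x, ‖U x y‖ₑ ∂μ ≤ C) (hC : C ≠ ⊤)
    {h : Ω → ℝ} (hh : Measurable h) (hh1 : ∀ x, |h x| ≤ 1) (hh1' : ∀ x, |1 - h x| ≤ 1)
    {f g : Ω → ℝ} (hf : Measurable f) (hg : Measurable g)
    (hf2 : ∫⁻ x, ‖f x‖ₑ ^ 2 ∂μ ≤ 1) (hg2 : ∫⁻ y, ‖g y‖ₑ ^ 2 ∂μ ≤ 1) :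
    ∫ x, ∫ y, f x * U x y * g y ∂μ ∂μ
      = ∫ x, ∫ y, h x * f x * U x y * (h y * g y) ∂μ ∂μ
        + ∫ z, (1 - h z.1) * f z.1 * U z.1 z.2 * g z.2 ∂μ.prod μ
        + ∫ z, h z.1 * f z.1 * U z.1 z.2 * ((1 - h z.2) * g z.2) ∂μ.prod μ := by
  have hhf : Measurable fun x => h x * f x := hh.mul hf
  have hhg : Measurable fun x => h x * g x := hh.mul hg
  have hh'f : Measurable fun x => (1 - h x) * f x := (measurable_const.sub hh).mul hf
  have hh'g : Measurable fun x => (1 - h x) * g x := (measurable_const.sub hh).mul hg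
  have i₀ := integrable_pairing hU hrow hcol hC hf hg hf2 hg2
  have i₁ := integrable_pairing hU hrow hcol hC hhf hhg
    ((lintegral_enorm_mul_sq_le hh1 f).trans hf2) ((lintegral_enorm_mul_sq_le hh1 g).trans hg2)
  have i₂ := integrable_pairing hU hrow hcol hC hh'f hg
    ((lintegral_enorm_mul_sq_le hh1' f).trans hf2) hg2
  have i₃ := integrable_pairing hU hrow hcol hC hhf hh'g
    ((lintegral_enorm_mul_sq_le hh1 f).trans hf2) ((lintegral_enorm_mul_sq_le hh1' g).trans hg2)
  rw [← integral_prod _ i₀, ← integral_prod _ i₁, ← integral_add i₁ i₂, ← integral_add ?_ i₃]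
  · congr with z
    ring
  · exact i₁.add i₂

theorem integral_integral_le_withDensity_add (hU : Measurable (Function.uncurry U))
    (hsymm : ∀ x y, U x y = U y x) {M c r : ℝ} (hM0 : 0 ≤ M) (hc : 0 ≤ c) (hr : 0 ≤ r)
    (hM : ∀ x y, |U x y| ≤ M) (hrow : ∀ x, ∫⁻ y, ‖U x y‖ₑ ∂μ ≤ ENNReal.ofReal c)
    (hcol : ∀ y, ∫⁻ x, ‖U x y‖ₑ ∂μ ≤ ENNReal.ofReal c)
    {h : Ω → ℝ} (hh : Measurable h) (h01 : ∀ x, h x ∈ Set.Icc 0 1)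
    (hhr : ∫⁻ x, ENNReal.ofReal (1 - h x) ∂μ ≤ ENNReal.ofReal r)
    {f g : Ω → ℝ} (hf : Measurable f) (hg : Measurable g)
    (hf2 : ∫⁻ x, ‖f x‖ₑ ^ 2 ∂μ ≤ 1) (hg2 : ∫⁻ y, ‖g y‖ₑ ^ 2 ∂μ ≤ 1) :
    ∫ x, ∫ y, f x * U x y * g y ∂μ ∂μ
      ≤ ∫ x, ∫ y, f x * U x y * g y ∂μ.withDensity (fun x => ENNReal.ofReal (h x))
          ∂μ.withDensity (fun x => ENNReal.ofReal (h x)) + 2 * √(c * r * M) := by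
  have h01' : ∀ x, 1 - h x ∈ Set.Icc 0 1 := fun x => Set.Icc.mem_iff_one_sub_mem.mp (h01 x)
  have habs : ∀ t ∈ Set.Icc (0 : ℝ) 1, |t| ≤ 1 := fun t ht =>
    abs_le.mpr ⟨by linarith [ht.1], ht.2⟩
  have hcross := fun a b (ha : Measurable a) (hb : Measurable b) ha2 hb2 =>
    integral_prod_weight_pairing_le hU hM0 hc hr hM hrow (w := fun x => 1 - h x)
      (measurable_const.sub hh) h01' hhr ha hb ha2 hb2
  have hhf2 : ∫⁻ x, ‖h x * f x‖ₑ ^ 2 ∂μ ≤ 1 :=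
    (lintegral_enorm_mul_sq_le (fun x => habs _ (h01 x)) f).trans hf2
  have hswap : ∫ z, h z.1 * f z.1 * U z.1 z.2 * ((1 - h z.2) * g z.2) ∂μ.prod μ
      = ∫ z, (1 - h z.1) * g z.1 * U z.1 z.2 * (h z.2 * f z.2) ∂μ.prod μ :=
    integral_prod_pairing_swap hsymm (fun x => h x * f x) (fun y => (1 - h y) * g y)
  rw [integral_integral_withDensity_ofReal hh (fun x => (h01 x).1),
    integral_integral_eq_add_add hU hrow hcol ofReal_ne_top hh (fun x => habs _ (h01 x))
      (fun x => habs _ (h01' x)) hf hg hf2 hg2, hswap]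
  linarith [hcross f g hf hg hf2 hg2, hcross g (fun x => h x * f x) hg (hh.mul hf) hg2 hhf2]

end Pairing

section KernelNorm

variable {Ω : Type*} [MeasurableSpace Ω] {ν : Measure Ω} {U : Ω → Ω → ℝ}

theorem kernelNorm_nonneg (ν : Measure Ω) (U : Ω → Ω → ℝ) : 0 ≤ kernelNorm ν U := by
  by_cases hS : ∃ f g : Ω → ℝ, Measurable f ∧ Measurable g ∧
      eLpNorm f 2 ν = 1 ∧ eLpNorm g 2 ν = 1
  · obtain ⟨f, g, hf, hg, hf1, hg1⟩ := hS
    refine Real.sSup_nonneg' ?_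
    rcases le_total 0 (∫ x, ∫ y, f x * U x y * g y ∂ν ∂ν) with h | h
    · exact ⟨_, ⟨f, g, hf, hg, hf1, hg1, rfl⟩, h⟩
    · refine ⟨_, ⟨f, -g, hf, hg.neg, hf1, by rwa [eLpNorm_neg], rfl⟩, ?_⟩
      simpa only [Pi.neg_apply, mul_neg, integral_neg, neg_nonneg] using h
  · exact Real.sSup_nonneg fun _ ⟨f, g, hf, hg, hf1, hg1, _⟩ =>
      (hS ⟨f, g, hf, hg, hf1, hg1⟩).elim

theorem eLpNorm_inv_toReal_smul_self {f : Ω → ℝ} (h0 : eLpNorm f 2 ν ≠ 0)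
    (htop : eLpNorm f 2 ν ≠ ⊤) : eLpNorm ((eLpNorm f 2 ν).toReal⁻¹ • f) 2 ν = 1 := by
  rw [eLpNorm_const_smul, enorm_inv (ENNReal.toReal_ne_zero.mpr ⟨h0, htop⟩),
    Real.enorm_of_nonneg ENNReal.toReal_nonneg, ENNReal.ofReal_toReal htop,
    ENNReal.inv_mul_cancel h0 htop]

theorem integral_integral_eq_zero_of_eLpNorm_eq_zero {f g : Ω → ℝ} (hf : Measurable f)
    (hg : Measurable g) (h0 : eLpNorm f 2 ν = 0 ∨ eLpNorm g 2 ν = 0) :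
    ∫ x, ∫ y, f x * U x y * g y ∂ν ∂ν = 0 := by
  rcases h0 with h0 | h0
  · rw [eLpNorm_eq_zero_iff hf.aestronglyMeasurable two_ne_zero] at h0
    refine integral_eq_zero_of_ae ?_
    filter_upwards [h0] with x hx
    simp [hx]
  · rw [eLpNorm_eq_zero_iff hg.aestronglyMeasurable two_ne_zero] at h0
    refine integral_eq_zero_of_ae (ae_of_all _ fun x => integral_eq_zero_of_ae ?_)
    filter_upwards [h0] with y hy
    simp [hy]

theorem integral_integral_le_kernelNorm {C : ℝ}
    (hC : ∀ f g : Ω → ℝ, Measurable f → Measurable g → eLpNorm f 2 ν = 1 →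
      eLpNorm g 2 ν = 1 → ∫ x, ∫ y, f x * U x y * g y ∂ν ∂ν ≤ C)
    {f g : Ω → ℝ} (hf : Measurable f) (hg : Measurable g)
    (hf1 : eLpNorm f 2 ν ≤ 1) (hg1 : eLpNorm g 2 ν ≤ 1) :
    ∫ x, ∫ y, f x * U x y * g y ∂ν ∂ν ≤ kernelNorm ν U := by
  by_cases h0 : eLpNorm f 2 ν = 0 ∨ eLpNorm g 2 ν = 0
  · rw [integral_integral_eq_zero_of_eLpNorm_eq_zero hf hg h0]
    exact kernelNorm_nonneg ν U
  obtain ⟨hf0, hg0⟩ := not_or.mp h0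
  have hftop : eLpNorm f 2 ν ≠ ⊤ := (hf1.trans_lt one_lt_top).ne
  have hgtop : eLpNorm g 2 ν ≠ ⊤ := (hg1.trans_lt one_lt_top).ne
  set a := (eLpNorm f 2 ν).toReal
  set b := (eLpNorm g 2 ν).toReal
  have ha : 0 < a := ENNReal.toReal_pos hf0 hftop
  have hb : 0 < b := ENNReal.toReal_pos hg0 hgtop
  have hab : a * b ≤ 1 :=
    mul_le_one₀ (ENNReal.toReal_le_of_le_ofReal zero_le_one (by simpa using hf1)) hb.le
      (ENNReal.toReal_le_of_le_ofReal zero_le_one (by simpa using hg1))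
  have hbdd : BddAbove {r : ℝ | ∃ f g : Ω → ℝ, Measurable f ∧ Measurable g ∧
      eLpNorm f 2 ν = 1 ∧ eLpNorm g 2 ν = 1 ∧ r = ∫ x, ∫ y, f x * U x y * g y ∂ν ∂ν} :=
    ⟨C, by rintro _ ⟨F, G, hF, hG, hF1, hG1, rfl⟩; exact hC F G hF hG hF1 hG1⟩
  have hJ := le_csSup hbdd ⟨a⁻¹ • f, b⁻¹ • g, hf.const_smul _, hg.const_smul _,
    eLpNorm_inv_toReal_smul_self hf0 hftop, eLpNorm_inv_toReal_smul_self hg0 hgtop, rfl⟩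
  calc ∫ x, ∫ y, f x * U x y * g y ∂ν ∂ν
      = (a * b) * ∫ x, ∫ y, (a⁻¹ • f) x * U x y * (b⁻¹ • g) y ∂ν ∂ν := by
        simp only [← integral_const_mul, Pi.smul_apply, smul_eq_mul]
        congr with x
        congr with y
        field_simp
    _ ≤ (a * b) * kernelNorm ν U := mul_le_mul_of_nonneg_left hJ (by positivity)
    _ ≤ kernelNorm ν U := mul_le_of_le_one_left (kernelNorm_nonneg ν U) hab

theorem integral_integral_le_kernelNorm_of_le {μ : Measure Ω} [SFinite ν] (hνμ : ν ≤ μ)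
    (hU : Measurable (Function.uncurry U)) {c : ℝ} (hc : 0 ≤ c)
    (hrow : ∀ x, ∫⁻ y, ‖U x y‖ₑ ∂μ ≤ ENNReal.ofReal c)
    (hcol : ∀ y, ∫⁻ x, ‖U x y‖ₑ ∂μ ≤ ENNReal.ofReal c)
    {f g : Ω → ℝ} (hf : Measurable f) (hg : Measurable g)
    (hf1 : eLpNorm f 2 μ ≤ 1) (hg1 : eLpNorm g 2 μ ≤ 1) :
    ∫ x, ∫ y, f x * U x y * g y ∂ν ∂ν ≤ kernelNorm ν U :=
  integral_integral_le_kernelNorm (fun _ _ hF hG hF1 hG1 =>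
      integral_integral_pairing_le hU hc (fun x => (lintegral_mono' hνμ le_rfl).trans (hrow x))
        (fun y => (lintegral_mono' hνμ le_rfl).trans (hcol y)) hF hG
        (lintegral_enorm_sq_le_one hF1.le) (lintegral_enorm_sq_le_one hG1.le))
    hf hg ((eLpNorm_mono_measure f hνμ).trans hf1) ((eLpNorm_mono_measure g hνμ).trans hg1)

end KernelNorm

/-- Let `U : Ω × Ω → ℝ` be symmetric measurable with `‖U‖_∞ ≤ 2B` and
`‖D_{|U|}‖_∞ ≤ 2D` on a σ-finite measure space `(Ω, ℱ, μ)`, and let `μ'` be the measure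
with density `h : Ω → [0,1]` with respect to `μ`, where `‖1 − h‖_{1,μ} ≤ r` (so
`μ − r ≤ μ' ≤ μ`).  Then `‖U‖_{2→2,μ} ≤ ‖U‖_{2→2,μ'} + 4 √(B D r)`. -/
theorem stmt18 {Ω : Type*} [MeasurableSpace Ω]
    (μ : Measure Ω) [SigmaFinite μ]
    (B D r : ℝ) (hB : 0 ≤ B) (hD : 0 ≤ D) (hr : 0 ≤ r)
    (U : Ω → Ω → ℝ) (hmeas : Measurable (Function.uncurry U))
    (hsymm : ∀ x y, U x y = U y x)
    (hUbdd : ∀ x y, |U x y| ≤ 2 * B)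
    (hUmarg : ∀ x, (∫⁻ y, ENNReal.ofReal |U x y| ∂μ) ≤ ENNReal.ofReal (2 * D))
    (h : Ω → ℝ) (hh : Measurable h) (hh01 : ∀ x, h x ∈ Set.Icc (0:ℝ) 1)
    (hhr : (∫⁻ x, ENNReal.ofReal (1 - h x) ∂μ) ≤ ENNReal.ofReal r) :
    kernelNorm μ U ≤
      kernelNorm (μ.withDensity fun x => ENNReal.ofReal (h x)) U
        + 4 * Real.sqrt (B * D * r) := by
  set ν := μ.withDensity fun x => ENNReal.ofReal (h x)
  have hrow : ∀ x, ∫⁻ y, ‖U x y‖ₑ ∂μ ≤ ENNReal.ofReal (2 * D) := by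
    simpa only [Real.enorm_eq_ofReal_abs] using hUmarg
  have hcol : ∀ y, ∫⁻ x, ‖U x y‖ₑ ∂μ ≤ ENNReal.ofReal (2 * D) := fun y => by
    simpa only [hsymm _ y] using hrow y
  have hνμ : ν ≤ μ := (withDensity_mono
    (ae_of_all _ fun x => ENNReal.ofReal_le_one.mpr (hh01 x).2)).trans_eq withDensity_one
  refine Real.sSup_le ?_ (add_nonneg (kernelNorm_nonneg _ _) (by positivity))
  rintro _ ⟨f, g, hf, hg, hf1, hg1, rfl⟩
  have hf2 := lintegral_enorm_sq_le_one hf1.le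
  have hg2 := lintegral_enorm_sq_le_one hg1.le
  have hsqrt : 2 * √(2 * D * r * (2 * B)) = 4 * √(B * D * r) := by
    rw [show 2 * D * r * (2 * B) = 2 ^ 2 * (B * D * r) by ring,
      Real.sqrt_mul' _ (by positivity), Real.sqrt_sq zero_le_two]
    ring
  calc ∫ x, ∫ y, f x * U x y * g y ∂μ ∂μ
      ≤ ∫ x, ∫ y, f x * U x y * g y ∂ν ∂ν + 2 * √(2 * D * r * (2 * B)) :=
        integral_integral_le_withDensity_add hmeas hsymm (by positivity) (by positivity) hr hUbdd
          hrow hcol hh hh01 hhr hf hg hf2 hg2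
    _ ≤ kernelNorm ν U + 4 * √(B * D * r) := by
        rw [hsqrt]
        gcongr
        exact integral_integral_le_kernelNorm_of_le hνμ hmeas (by positivity) hrow hcol hf hg
          hf1.le hg1.le
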